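/- arXiv:1301.6752 — 4 statements merged into one kernel-verified Lean document; each statement's English description precedes it below -/
import Mathlib

section
/- Let A ∈ ℂ^{m×p}, B ∈ ℂ^{q×m} and let C ∈ ℂ^{m×m} be Hermitian. Put M = [E_A, F_B] ∈ ℂ^{m×2m}. Then there exists a matrix X ∈ ℂ^{p×q} such that AXB is Hermitian and AXB ⪰ C if and only if M*CM ⪯ 0 and ℛ(M*CM) = ℛ(M*C). -/
/-!
`E_A` and `F_B` are Hermitian projections with `E_A A = 0`, `B F_B = 0`, `1 - E_A = A G` and
`1 - F_B = H B` for suitable `G`, `H`; hence `Z = A X B` for some `X` iff `E_A Z = 0` and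
`Z F_B = 0`, which for Hermitian `Z` says `M* Z = 0`. The question thus becomes: when is there
`Z ⪰ C` with `M* Z = 0`? If so, `S = Z - C ⪰ 0` gives `M* C M = -M* S M ⪯ 0` and `M* C = -M* S`,
and `N* S N`, `N* S` have the same range for every `S ⪰ 0` (write `S = L* L`). Conversely the
range condition provides `G` with `(M* C M) G = M* C`, and `Z = C - G* (M* C M) G` works.
-/

open Matrix ComplexOrder

/-- The matrix of the orthogonal projection of `ℂ^m` onto the subspace `U`. -/
noncomputable def projMat {m : ℕ} (U : Submodule ℂ (EuclideanSpace ℂ (Fin m))) :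
    Matrix (Fin m) (Fin m) ℂ :=
  Matrix.toEuclideanLin.symm (U.subtype ∘ₗ (U.orthogonalProjectionOnto).toLinearMap)

/-- `E_A`: orthogonal projection onto the orthogonal complement of the column space of `A`. -/
noncomputable def eProj {m p : ℕ} (A : Matrix (Fin m) (Fin p) ℂ) : Matrix (Fin m) (Fin m) ℂ :=
  projMat (LinearMap.range (Matrix.toEuclideanLin A))ᗮ

/-- `F_B`: orthogonal projection onto the kernel of `B`. -/
noncomputable def fProj {q m : ℕ} (B : Matrix (Fin q) (Fin m) ℂ) : Matrix (Fin m) (Fin m) ℂ :=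
  projMat (LinearMap.ker (Matrix.toEuclideanLin B))

/-- `i₊`: the number of positive eigenvalues of a Hermitian matrix, with multiplicity. -/
noncomputable def iPos {ι : Type} [Fintype ι] [DecidableEq ι] (A : Matrix ι ι ℂ) : ℕ :=
  if h : A.IsHermitian then Nat.card {i : ι // 0 < h.eigenvalues i} else 0

/-- `i₋`: the number of negative eigenvalues of a Hermitian matrix, with multiplicity. -/
noncomputable def iNeg {ι : Type} [Fintype ι] [DecidableEq ι] (A : Matrix ι ι ℂ) : ℕ :=
  if h : A.IsHermitian then Nat.card {i : ι // h.eigenvalues i < 0} else 0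

section Factorization

variable {R l n k : Type*} [Fintype n] [Fintype k]

theorem Matrix.mulVecLin_neg [CommRing R] (A : Matrix l n R) : (-A).mulVecLin = -A.mulVecLin :=
  LinearMap.ext fun v => neg_mulVec v A

theorem Matrix.exists_mul_eq_of_range_mulVecLin_le [Field R] {A : Matrix l n R}
    {N : Matrix l k R} (h : LinearMap.range N.mulVecLin ≤ LinearMap.range A.mulVecLin) :
    ∃ G : Matrix n k R, A * G = N := by
  classical
  choose g hg using fun j => h ⟨Pi.single j 1, rfl⟩
  refine ⟨(Matrix.of g)ᵀ, ?_⟩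
  ext i j
  have hij := congrFun (hg j) i
  rw [mulVecLin_apply, mulVecLin_apply, mulVec_single_one] at hij
  simpa [mul_apply, mulVec, dotProduct, mul_comm] using hij

theorem Matrix.range_mulVecLin_conjTranspose_mul_self [Fintype l] [Field R] [PartialOrder R]
    [StarRing R] [StarOrderedRing R] (N : Matrix l n R) :
    LinearMap.range (Nᴴ * N).mulVecLin = LinearMap.range Nᴴ.mulVecLin := by
  refine Submodule.eq_of_le_of_finrank_le ?_ ?_
  · rw [Matrix.mulVecLin_mul]
    exact LinearMap.range_comp_le_range _ _
  · have h := Matrix.rank_conjTranspose_mul_self N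
    rw [← Matrix.rank_conjTranspose N] at h
    exact h.ge

theorem Matrix.conjTranspose_fromCols_mul_eq_zero_iff {R m n₁ n₂ l : Type*} [Semiring R]
    [StarRing R] [Fintype m] (P : Matrix m n₁ R) (Q : Matrix m n₂ R) (Z : Matrix m l R) :
    (fromCols P Q)ᴴ * Z = 0 ↔ Pᴴ * Z = 0 ∧ Qᴴ * Z = 0 := by
  rw [conjTranspose_fromCols_eq_fromRows_conjTranspose, fromRows_mul, ← fromRows_zero,
    fromRows_ext_iff]

end Factorization

section Solvability

variable {𝕜 n k : Type*} [RCLike 𝕜] [Fintype n] [Fintype k]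

theorem Matrix.PosSemidef.range_mulVecLin_conjTranspose_mul_mul {S : Matrix n n 𝕜}
    (hS : S.PosSemidef) (N : Matrix n k 𝕜) :
    LinearMap.range (Nᴴ * S * N).mulVecLin = LinearMap.range (Nᴴ * S).mulVecLin := by
  classical
  open scoped MatrixOrder in
  obtain ⟨L, rfl⟩ := CStarAlgebra.nonneg_iff_eq_star_mul_self.mp hS.nonneg
  have hSN : Nᴴ * (star L * L) * N = (L * N)ᴴ * (L * N) := by
    simp only [star_eq_conjTranspose, conjTranspose_mul, Matrix.mul_assoc]
  refine le_antisymm (by rw [mulVecLin_mul]; exact LinearMap.range_comp_le_range _ _) ?_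
  calc LinearMap.range (Nᴴ * (star L * L)).mulVecLin
      ≤ LinearMap.range (L * N)ᴴ.mulVecLin := by
        rw [← Matrix.mul_assoc, mulVecLin_mul, conjTranspose_mul, star_eq_conjTranspose]
        exact LinearMap.range_comp_le_range _ _
    _ = _ := by rw [hSN, range_mulVecLin_conjTranspose_mul_self]

theorem Matrix.exists_posSemidef_sub_and_conjTranspose_mul_eq_zero_iff {C : Matrix n n 𝕜}
    (hC : C.IsHermitian) (M : Matrix n k 𝕜) :
    (∃ Z : Matrix n n 𝕜, (Z - C).PosSemidef ∧ Mᴴ * Z = 0) ↔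
      (-(Mᴴ * C * M)).PosSemidef ∧
        LinearMap.range (Mᴴ * C * M).mulVecLin = LinearMap.range (Mᴴ * C).mulVecLin := by
  constructor
  · rintro ⟨Z, hS, hMZ⟩
    have hMC : Mᴴ * C = -(Mᴴ * (Z - C)) := by rw [Matrix.mul_sub, hMZ, zero_sub, neg_neg]
    have hMCM : Mᴴ * C * M = -(Mᴴ * (Z - C) * M) := by rw [hMC, Matrix.neg_mul]
    refine ⟨by simpa [hMCM] using hS.conjTranspose_mul_mul_same M, ?_⟩
    rw [hMCM, hMC, Matrix.mulVecLin_neg, Matrix.mulVecLin_neg, LinearMap.range_neg,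
      LinearMap.range_neg, hS.range_mulVecLin_conjTranspose_mul_mul]
  · rintro ⟨hD, hR⟩
    obtain ⟨G, hG⟩ := exists_mul_eq_of_range_mulVecLin_le hR.ge
    have hCM : C * M = Gᴴ * (Mᴴ * C * M) := by
      simpa [conjTranspose_mul, hC.eq, Matrix.mul_assoc] using (congrArg conjTranspose hG).symm
    -- `Z = C - C M (Mᴴ C M)⁺ Mᴴ C`, with `G` standing in for `(Mᴴ C M)⁺ Mᴴ C`
    refine ⟨C - Gᴴ * (Mᴴ * C * M) * G, ?_, ?_⟩
    · simpa [Matrix.mul_neg, Matrix.neg_mul] using hD.conjTranspose_mul_mul_same G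
    · rw [← hCM, Matrix.mul_sub, ← Matrix.mul_assoc, ← Matrix.mul_assoc, hG, sub_self]

end Solvability

section Projection

variable {m : ℕ}

theorem toEuclideanLin_projMat (U : Submodule ℂ (EuclideanSpace ℂ (Fin m))) :
    toEuclideanLin (projMat U) = U.starProjection.toLinearMap :=
  toEuclideanLin.apply_symm_apply _

theorem projMat_isHermitian (U : Submodule ℂ (EuclideanSpace ℂ (Fin m))) :
    (projMat U).IsHermitian := by
  rw [← isSymmetric_toEuclideanLin_iff, toEuclideanLin_projMat]
  exact U.starProjection_isSymmetric

theorem projMat_orthogonal (U : Submodule ℂ (EuclideanSpace ℂ (Fin m))) :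
    projMat Uᗮ = 1 - projMat U := by
  apply toEuclideanLin.injective
  rw [map_sub, toEuclideanLin_projMat, toEuclideanLin_projMat, Submodule.starProjection_orthogonal]
  simp

theorem projMat_mul_eq_zero {k : Type*} [Fintype k] [DecidableEq k]
    {U : Submodule ℂ (EuclideanSpace ℂ (Fin m))} {N : Matrix (Fin m) k ℂ}
    (h : LinearMap.range (toEuclideanLin N) ≤ Uᗮ) : projMat U * N = 0 := by
  apply toEuclideanLin.injective
  ext1 x
  simpa [toEuclideanLin_projMat] using
    Submodule.starProjection_orthogonal_apply_eq_zero (h ⟨x, rfl⟩)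

theorem range_mulVecLin_projMat_le {k : Type*} [Fintype k] [DecidableEq k]
    {U : Submodule ℂ (EuclideanSpace ℂ (Fin m))} {N : Matrix (Fin m) k ℂ}
    (h : U ≤ LinearMap.range (toEuclideanLin N)) :
    LinearMap.range (projMat U).mulVecLin ≤ LinearMap.range N.mulVecLin := by
  rintro _ ⟨x, rfl⟩
  obtain ⟨y, hy⟩ := h (U.starProjection_apply_mem (WithLp.toLp 2 x))
  have hPx : toEuclideanLin (projMat U) (WithLp.toLp 2 x) = toEuclideanLin N y := by
    rw [toEuclideanLin_projMat]
    exact hy.symm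
  exact ⟨WithLp.ofLp y, (congrArg WithLp.ofLp hPx).symm⟩

end Projection

section AnnihilatorProjections

variable {m p q : ℕ}

theorem eProj_eq_one_sub (A : Matrix (Fin m) (Fin p) ℂ) :
    eProj A = 1 - projMat (LinearMap.range (toEuclideanLin A)) :=
  projMat_orthogonal _

theorem fProj_eq_eProj_conjTranspose (B : Matrix (Fin q) (Fin m) ℂ) : fProj B = eProj Bᴴ := by
  rw [fProj, eProj, LinearMap.orthogonal_range, ← toEuclideanLin_conjTranspose_eq_adjoint,
    conjTranspose_conjTranspose]

theorem eProj_isHermitian (A : Matrix (Fin m) (Fin p) ℂ) : (eProj A).IsHermitian :=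
  projMat_isHermitian _

theorem fProj_isHermitian (B : Matrix (Fin q) (Fin m) ℂ) : (fProj B).IsHermitian :=
  projMat_isHermitian _

theorem eProj_mul_eq_zero (A : Matrix (Fin m) (Fin p) ℂ) : eProj A * A = 0 :=
  projMat_mul_eq_zero (Submodule.le_orthogonal_orthogonal _)

theorem mul_fProj_eq_zero (B : Matrix (Fin q) (Fin m) ℂ) : B * fProj B = 0 := by
  rw [fProj_eq_eProj_conjTranspose, ← (eProj_isHermitian Bᴴ).eq, ← conjTranspose_conjTranspose B,
    ← conjTranspose_mul, conjTranspose_conjTranspose, eProj_mul_eq_zero, conjTranspose_zero]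

theorem exists_mul_eq_one_sub_eProj (A : Matrix (Fin m) (Fin p) ℂ) :
    ∃ G : Matrix (Fin p) (Fin m) ℂ, A * G = 1 - eProj A := by
  rw [eProj_eq_one_sub, sub_sub_cancel]
  exact exists_mul_eq_of_range_mulVecLin_le (range_mulVecLin_projMat_le le_rfl)

theorem exists_mul_eq_one_sub_fProj (B : Matrix (Fin q) (Fin m) ℂ) :
    ∃ G : Matrix (Fin m) (Fin q) ℂ, G * B = 1 - fProj B := by
  obtain ⟨G, hG⟩ := exists_mul_eq_one_sub_eProj Bᴴ
  refine ⟨Gᴴ, ?_⟩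
  rw [fProj_eq_eProj_conjTranspose, ← (eProj_isHermitian Bᴴ).eq, ← conjTranspose_one,
    ← conjTranspose_sub, ← hG, conjTranspose_mul, conjTranspose_conjTranspose]

theorem exists_mul_mul_eq_iff (A : Matrix (Fin m) (Fin p) ℂ) (B : Matrix (Fin q) (Fin m) ℂ)
    (Z : Matrix (Fin m) (Fin m) ℂ) :
    (∃ X : Matrix (Fin p) (Fin q) ℂ, A * X * B = Z) ↔ eProj A * Z = 0 ∧ Z * fProj B = 0 := by
  constructor
  · rintro ⟨X, rfl⟩
    refine ⟨?_, ?_⟩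
    · rw [Matrix.mul_assoc, ← Matrix.mul_assoc (eProj A), eProj_mul_eq_zero, Matrix.zero_mul]
    · rw [Matrix.mul_assoc, mul_fProj_eq_zero, Matrix.mul_zero]
  · rintro ⟨hAZ, hZB⟩
    obtain ⟨G, hG⟩ := exists_mul_eq_one_sub_eProj A
    obtain ⟨H, hH⟩ := exists_mul_eq_one_sub_fProj B
    refine ⟨G * Z * H, ?_⟩
    calc A * (G * Z * H) * B = (A * G) * Z * (H * B) := by simp only [Matrix.mul_assoc]
      _ = Z := by rw [hG, hH, Matrix.sub_mul, hAZ, Matrix.one_mul, sub_zero, Matrix.mul_sub, hZB,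
            Matrix.mul_one, sub_zero]

theorem conjTranspose_fromCols_eProj_fProj_mul_eq_zero_iff (A : Matrix (Fin m) (Fin p) ℂ)
    (B : Matrix (Fin q) (Fin m) ℂ) {Z : Matrix (Fin m) (Fin m) ℂ} (hZ : Z.IsHermitian) :
    (fromCols (eProj A) (fProj B))ᴴ * Z = 0 ↔ ∃ X : Matrix (Fin p) (Fin q) ℂ, A * X * B = Z := by
  rw [conjTranspose_fromCols_mul_eq_zero_iff, exists_mul_mul_eq_iff, (eProj_isHermitian A).eq,
    (fProj_isHermitian B).eq, ← conjTranspose_eq_zero (M := fProj B * Z), conjTranspose_mul,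
    hZ.eq, (fProj_isHermitian B).eq]

end AnnihilatorProjections

theorem stmt0 {m p q : ℕ} (A : Matrix (Fin m) (Fin p) ℂ) (B : Matrix (Fin q) (Fin m) ℂ)
    (C : Matrix (Fin m) (Fin m) ℂ) (hC : C.IsHermitian)
    (M : Matrix (Fin m) (Fin m ⊕ Fin m) ℂ) (hM : M = Matrix.fromCols (eProj A) (fProj B)) :
    (∃ X : Matrix (Fin p) (Fin q) ℂ,
        (A * X * B).IsHermitian ∧ (A * X * B - C).PosSemidef) ↔
      (-(Mᴴ * C * M)).PosSemidef ∧
        LinearMap.range (Mᴴ * C * M).mulVecLin = LinearMap.range (Mᴴ * C).mulVecLin := by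
  subst hM
  have hZ {Z : Matrix (Fin m) (Fin m) ℂ} (hS : (Z - C).PosSemidef) : Z.IsHermitian := by
    simpa using hS.isHermitian.add hC
  rw [← exists_posSemidef_sub_and_conjTranspose_mul_eq_zero_iff hC]
  constructor
  · rintro ⟨X, -, hS⟩
    exact ⟨_, hS, (conjTranspose_fromCols_eProj_fProj_mul_eq_zero_iff A B (hZ hS)).2 ⟨X, rfl⟩⟩
  · rintro ⟨Z, hS, hMZ⟩
    obtain ⟨X, rfl⟩ := (conjTranspose_fromCols_eProj_fProj_mul_eq_zero_iff A B (hZ hS)).1 hMZ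
    exact ⟨X, hZ hS, hS⟩
end

section
/- Let A ∈ ℂ^{m×n} and B ∈ ℂ^{m×m}. Then there exists a Hermitian X ∈ ℂ^{n×n} such that AXA* ≻ −BB* if and only if r([A, B]) = m, where [A, B] is the m×(n+m) block matrix. -/
/-!
The identity `A X Aᴴ + B Bᴴ = [A, B] · diag(X, I) · [A, B]ᴴ` does everything: if the left side is
positive definite it is invertible, so `[A, B]` has full row rank; conversely, for `X = I` the
right side is the Gram matrix `[A, B] [A, B]ᴴ`, which is positive semidefinite and, having the
rank of `[A, B]`, invertible.
-/

open Matrix ComplexOrder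

namespace Matrix

variable {m n k R : Type*} [Fintype n] [Fintype k]

theorem fromCols_mul_fromBlocks_one_mul_conjTranspose [CommSemiring R] [StarRing R] [DecidableEq k]
    (A : Matrix m n R) (B : Matrix m k R) (X : Matrix n n R) :
    fromCols A B * (fromBlocks X 0 0 1 : Matrix (n ⊕ k) (n ⊕ k) R) * (fromCols A B)ᴴ =
      A * X * Aᴴ + B * Bᴴ := by
  rw [conjTranspose_fromCols_eq_fromRows_conjTranspose, fromCols_mul_fromBlocks,
    fromCols_mul_fromRows]
  simp

theorem isUnit_of_rank_eq_card [Fintype m] [Field R] [DecidableEq m] {M : Matrix m m R}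
    (h : M.rank = Fintype.card m) : IsUnit M := by
  have : LinearMap.range M.mulVecLin = ⊤ :=
    Submodule.eq_top_of_finrank_eq (by rw [← rank, h, Module.finrank_fintype_fun_eq_card])
  exact mulVec_surjective_iff_isUnit.mp (LinearMap.range_eq_top.mp this)

theorem rank_eq_card_height_of_isUnit_mul [Fintype m] [Field R] [DecidableEq m]
    {C : Matrix m n R} {D : Matrix n m R} (h : IsUnit (C * D)) : C.rank = Fintype.card m :=
  le_antisymm C.rank_le_card_height <| (rank_of_isUnit _ h).symm.trans_le (rank_mul_le_left C D)

theorem posDef_self_mul_conjTranspose_of_rank_eq_card [Fintype m] {𝕜 : Type*} [RCLike 𝕜]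
    [DecidableEq m] {C : Matrix m n 𝕜} (h : C.rank = Fintype.card m) : (C * Cᴴ).PosDef :=
  (posSemidef_self_mul_conjTranspose C).posDef_iff_isUnit.mpr <|
    isUnit_of_rank_eq_card (by rw [rank_self_mul_conjTranspose, h])

end Matrix

theorem stmt7 {m n : ℕ} (A : Matrix (Fin m) (Fin n) ℂ) (B : Matrix (Fin m) (Fin m) ℂ) :
    (∃ X : Matrix (Fin n) (Fin n) ℂ, X.IsHermitian ∧ (A * X * Aᴴ - (-(B * Bᴴ))).PosDef) ↔
      (Matrix.fromCols A B).rank = m := by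
  simp_rw [sub_neg_eq_add]
  constructor
  · rintro ⟨X, -, hpd⟩
    rw [← fromCols_mul_fromBlocks_one_mul_conjTranspose, Matrix.mul_assoc] at hpd
    simpa using rank_eq_card_height_of_isUnit_mul hpd.isUnit
  · intro hr
    refine ⟨1, isHermitian_one, ?_⟩
    rw [← fromCols_mul_fromBlocks_one_mul_conjTranspose, fromBlocks_one, Matrix.mul_one]
    exact posDef_self_mul_conjTranspose_of_rank_eq_card (by simpa using hr)
end

section
/- Let A ∈ ℂ^{m×n}, B ∈ ℂ^{m×p} and C ∈ ℂ^{p×p}, and for Hermitian X ∈ ℂ^{n×n} let φ(X) denote the (m+p)×(m+p) Hermitian block matrix [AXA* B; B* CC*]. Then: (a) there exists a Hermitian X ∈ ℂ^{n×n} with φ(X) ⪰ 0 if and only if ℛ(B) ⊆ ℛ(A) and ℛ(B*) ⊆ ℛ(C); (b) there exists a Hermitian X ∈ ℂ^{n×n} with φ(X) ≻ 0 if and only if r(A) = m and r(C) = p. -/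
open Matrix ComplexOrder

/-!
(a) A positive semidefinite block matrix factors as `Nᴴ N` with `N = [N₁ N₂]`, so its
off-diagonal block `N₁ᴴ N₂` has range inside that of the diagonal block `N₁ᴴ N₁`. Conversely, if
`ℛ(Bᴴ) ⊆ ℛ(C)`, write `Bᴴ = C K` with `K = Cᴴ W`; then `ℛ(Kᴴ) = ℛ(Kᴴ K) = ℛ(B W) ⊆ ℛ(A)`, so
`Kᴴ = A U`, and `X = U Uᴴ` makes `φ X = [K Cᴴ]ᴴ [K Cᴴ]`.

(b) The diagonal blocks of a positive definite matrix are positive definite, which forces `A` and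
`C` to have full row rank. Conversely, full row rank of `A` lets `A X Aᴴ` be any Hermitian matrix;
taking it to be `B (C Cᴴ)⁻¹ Bᴴ + 1` makes the Schur complement of `C Cᴴ` the identity.
-/

namespace Matrix

variable {ι κ ν ρ : Type*}

theorem conjTranspose_fromCols_mul_fromCols [Fintype ι] {R : Type*} [Semiring R] [StarRing R]
    (K : Matrix ι κ R) (L : Matrix ι ρ R) :
    (fromCols K L)ᴴ * fromCols K L = fromBlocks (Kᴴ * K) (Kᴴ * L) (Lᴴ * K) (Lᴴ * L) := by
  rw [conjTranspose_fromCols_eq_fromRows_conjTranspose, fromRows_mul_fromCols]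

section CommSemiring

variable [Fintype κ] [Fintype ρ] {R : Type*} [CommSemiring R]

theorem range_mulVecLin_mul_le (M : Matrix ι κ R) (N : Matrix κ ρ R) :
    LinearMap.range (M * N).mulVecLin ≤ LinearMap.range M.mulVecLin := by
  rw [mulVecLin_mul]
  exact LinearMap.range_comp_le_range _ _

theorem exists_mul_eq_of_range_mulVecLin_le_s9 [DecidableEq ρ] {M : Matrix ι κ R}
    {N : Matrix ι ρ R} (h : LinearMap.range N.mulVecLin ≤ LinearMap.range M.mulVecLin) :
    ∃ W : Matrix κ ρ R, M * W = N := by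
  choose cols hcols using fun j => h ⟨Pi.single j 1, rfl⟩
  refine ⟨(of cols)ᵀ, ext fun i j => ?_⟩
  simpa [mul_apply, mulVec, dotProduct, Pi.single_apply] using congrFun (hcols j) i

end CommSemiring

section Field

variable [Fintype ι] [Fintype κ] {K : Type*} [Field K]

theorem rank_eq_card_of_isUnit_mul [DecidableEq ι] {A : Matrix ι κ K} {Y : Matrix κ ι K}
    (h : IsUnit (A * Y)) : A.rank = Fintype.card ι :=
  le_antisymm A.rank_le_card_height ((rank_of_isUnit _ h).symm.le.trans (rank_mul_le_left _ _))

theorem mulVec_surjective_of_rank_eq_card {A : Matrix ι κ K} (h : A.rank = Fintype.card ι) :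
    Function.Surjective A.mulVec :=
  LinearMap.range_eq_top.mp <| Submodule.eq_top_of_finrank_eq <|
    h.trans (Module.finrank_fintype_fun_eq_card K).symm

theorem exists_isHermitian_mul_mul_conjTranspose_eq [DecidableEq ι] [StarRing K]
    {A : Matrix ι κ K} (hA : A.rank = Fintype.card ι) {S : Matrix ι ι K} (hS : S.IsHermitian) :
    ∃ X : Matrix κ κ K, X.IsHermitian ∧ A * X * Aᴴ = S := by
  obtain ⟨R, hR⟩ :=
    mulVec_surjective_iff_exists_right_inverse.mp (mulVec_surjective_of_rank_eq_card hA)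
  refine ⟨R * S * Rᴴ, isHermitian_mul_mul_conjTranspose R hS, ?_⟩
  calc A * (R * S * Rᴴ) * Aᴴ = A * R * S * (A * R)ᴴ := by
        simp only [conjTranspose_mul, Matrix.mul_assoc]
    _ = S := by rw [hR, conjTranspose_one, one_mul, mul_one]

end Field

section RCLike

variable {𝕜 : Type*} [RCLike 𝕜]

theorem PosDef.of_fromBlocks {P : Matrix ι ι 𝕜} {B : Matrix ι κ 𝕜} {D : Matrix κ ι 𝕜}
    {Q : Matrix κ κ 𝕜} (h : (fromBlocks P B D Q).PosDef) : P.PosDef ∧ Q.PosDef :=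
  ⟨h.submatrix Sum.inl_injective, h.submatrix Sum.inr_injective⟩

variable [Fintype ι] [Fintype κ] [Fintype ν]

theorem range_mulVecLin_conjTranspose_mul_self_s9 (K : Matrix ι κ 𝕜) :
    LinearMap.range (Kᴴ * K).mulVecLin = LinearMap.range Kᴴ.mulVecLin :=
  Submodule.eq_of_le_of_finrank_le (range_mulVecLin_mul_le _ _)
    (by rw [← rank, ← rank, rank_conjTranspose_mul_self, rank_conjTranspose])

theorem range_mulVecLin_self_mul_conjTranspose (K : Matrix ι κ 𝕜) :
    LinearMap.range (K * Kᴴ).mulVecLin = LinearMap.range K.mulVecLin := by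
  simpa using range_mulVecLin_conjTranspose_mul_self_s9 Kᴴ

theorem posDef_self_mul_conjTranspose_iff [DecidableEq ι] {C : Matrix ι κ 𝕜} :
    (C * Cᴴ).PosDef ↔ C.rank = Fintype.card ι := by
  refine ⟨fun h => rank_eq_card_of_isUnit_mul h.isUnit, fun h => ?_⟩
  refine (posSemidef_self_mul_conjTranspose C).posDef_iff_isUnit.mpr ?_
  exact mulVec_surjective_iff_isUnit.mp
    (mulVec_surjective_of_rank_eq_card (by rwa [rank_self_mul_conjTranspose]))

theorem exists_mul_eq_conjTranspose_of_range_le {B : Matrix ι κ 𝕜} {C : Matrix κ ν 𝕜}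
    (h : LinearMap.range Bᴴ.mulVecLin ≤ LinearMap.range C.mulVecLin) :
    ∃ K : Matrix ν ι 𝕜,
      C * K = Bᴴ ∧ LinearMap.range Kᴴ.mulVecLin ≤ LinearMap.range B.mulVecLin := by
  classical
  rw [← range_mulVecLin_self_mul_conjTranspose C] at h
  obtain ⟨W, hW⟩ := exists_mul_eq_of_range_mulVecLin_le_s9 h
  have hCK : C * (Cᴴ * W) = Bᴴ := by rw [← Matrix.mul_assoc, hW]
  refine ⟨Cᴴ * W, hCK, ?_⟩
  have hKK : (Cᴴ * W)ᴴ * (Cᴴ * W) = B * W := by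
    rw [← Matrix.mul_assoc, ← conjTranspose_mul, hCK, conjTranspose_conjTranspose]
  rw [← range_mulVecLin_conjTranspose_mul_self_s9, hKK]
  exact range_mulVecLin_mul_le _ _

theorem PosSemidef.range_le_of_fromBlocks {P : Matrix ι ι 𝕜} {B : Matrix ι κ 𝕜}
    {Q : Matrix κ κ 𝕜} (h : (fromBlocks P B Bᴴ Q).PosSemidef) :
    LinearMap.range B.mulVecLin ≤ LinearMap.range P.mulVecLin := by
  classical
  open scoped MatrixOrder in
  obtain ⟨N, hN⟩ := CStarAlgebra.nonneg_iff_eq_star_mul_self.mp h.nonneg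
  rw [← fromCols_toCols N, star_eq_conjTranspose, conjTranspose_fromCols_mul_fromCols] at hN
  obtain ⟨rfl, rfl, -, -⟩ := fromBlocks_inj.mp hN
  rw [range_mulVecLin_conjTranspose_mul_self_s9]
  exact range_mulVecLin_mul_le _ _

theorem PosSemidef.range_conjTranspose_le_of_fromBlocks {P : Matrix ι ι 𝕜} {B : Matrix ι κ 𝕜}
    {Q : Matrix κ κ 𝕜} (h : (fromBlocks P B Bᴴ Q).PosSemidef) :
    LinearMap.range Bᴴ.mulVecLin ≤ LinearMap.range Q.mulVecLin := by
  have := h.submatrix Sum.swap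
  rw [fromBlocks_submatrix_sum_swap_sum_swap] at this
  exact PosSemidef.range_le_of_fromBlocks (by simpa using this)

theorem PosDef.fromBlocks₂₂_of_schur [DecidableEq ι] [DecidableEq κ] {S : Matrix ι ι 𝕜}
    (B : Matrix ι κ 𝕜) {Q : Matrix κ κ 𝕜} (hQ : Q.PosDef) (h : (S - B * Q⁻¹ * Bᴴ).PosDef) :
    (fromBlocks S B Bᴴ Q).PosDef := by
  let := hQ.isUnit.invertible
  refine ((hQ.fromBlocks₂₂ S B).mpr h.posSemidef).posDef_iff_det_ne_zero.mpr ?_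
  rw [det_fromBlocks₂₂, invOf_eq_nonsing_inv]
  exact mul_ne_zero hQ.det_pos.ne' h.det_pos.ne'

theorem exists_isHermitian_posSemidef_fromBlocks {A : Matrix ι ν 𝕜} {B : Matrix ι κ 𝕜}
    {C : Matrix κ κ 𝕜} (hB : LinearMap.range B.mulVecLin ≤ LinearMap.range A.mulVecLin)
    (hBH : LinearMap.range Bᴴ.mulVecLin ≤ LinearMap.range C.mulVecLin) :
    ∃ X : Matrix ν ν 𝕜, X.IsHermitian ∧ (fromBlocks (A * X * Aᴴ) B Bᴴ (C * Cᴴ)).PosSemidef := by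
  classical
  obtain ⟨K, hCK, hK⟩ := exists_mul_eq_conjTranspose_of_range_le hBH
  obtain ⟨U, hU⟩ := exists_mul_eq_of_range_mulVecLin_le_s9 (hK.trans hB)
  refine ⟨U * Uᴴ, isHermitian_mul_conjTranspose_self U, ?_⟩
  have hAXA : A * (U * Uᴴ) * Aᴴ = Kᴴ * K := by
    rw [← Matrix.mul_assoc A, Matrix.mul_assoc (A * U), ← conjTranspose_mul, hU,
      conjTranspose_conjTranspose]
  have hB : B = Kᴴ * Cᴴ := by rw [← conjTranspose_mul, hCK, conjTranspose_conjTranspose]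
  have := posSemidef_conjTranspose_mul_self (fromCols K Cᴴ)
  rw [conjTranspose_fromCols_mul_fromCols] at this
  simpa [hAXA, hB] using this

theorem exists_isHermitian_posDef_fromBlocks [DecidableEq ι] [DecidableEq κ] {A : Matrix ι ν 𝕜}
    (B : Matrix ι κ 𝕜) {C : Matrix κ κ 𝕜} (hA : A.rank = Fintype.card ι)
    (hC : C.rank = Fintype.card κ) :
    ∃ X : Matrix ν ν 𝕜, X.IsHermitian ∧ (fromBlocks (A * X * Aᴴ) B Bᴴ (C * Cᴴ)).PosDef := by
  have hQ := posDef_self_mul_conjTranspose_iff.mpr hC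
  obtain ⟨X, hX, hAXA⟩ := exists_isHermitian_mul_mul_conjTranspose_eq hA
    ((isHermitian_mul_mul_conjTranspose B hQ.inv.isHermitian).add isHermitian_one)
  refine ⟨X, hX, hAXA ▸ hQ.fromBlocks₂₂_of_schur B ?_⟩
  rw [add_sub_cancel_left]
  exact PosDef.one

end RCLike

end Matrix

theorem stmt9 {m n p : ℕ} (A : Matrix (Fin m) (Fin n) ℂ) (B : Matrix (Fin m) (Fin p) ℂ)
    (C : Matrix (Fin p) (Fin p) ℂ)
    (φ : Matrix (Fin n) (Fin n) ℂ → Matrix (Fin m ⊕ Fin p) (Fin m ⊕ Fin p) ℂ)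
    (hφ : ∀ X, φ X = Matrix.fromBlocks (A * X * Aᴴ) B Bᴴ (C * Cᴴ)) :
    ((∃ X : Matrix (Fin n) (Fin n) ℂ, X.IsHermitian ∧ (φ X).PosSemidef) ↔
        LinearMap.range B.mulVecLin ≤ LinearMap.range A.mulVecLin ∧
          LinearMap.range Bᴴ.mulVecLin ≤ LinearMap.range C.mulVecLin) ∧
      ((∃ X : Matrix (Fin n) (Fin n) ℂ, X.IsHermitian ∧ (φ X).PosDef) ↔
        A.rank = m ∧ C.rank = p) := by
  simp only [hφ]
  refine ⟨⟨?_, fun ⟨hB, hBH⟩ => exists_isHermitian_posSemidef_fromBlocks hB hBH⟩, ⟨?_, ?_⟩⟩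
  · rintro ⟨X, -, hX⟩
    rw [Matrix.mul_assoc] at hX
    exact ⟨hX.range_le_of_fromBlocks.trans (range_mulVecLin_mul_le _ _),
      hX.range_conjTranspose_le_of_fromBlocks.trans (range_mulVecLin_mul_le _ _)⟩
  · rintro ⟨X, -, hX⟩
    obtain ⟨hP, hQ⟩ := hX.of_fromBlocks
    rw [Matrix.mul_assoc] at hP
    exact ⟨by simpa using rank_eq_card_of_isUnit_mul hP.isUnit,
      by simpa using posDef_self_mul_conjTranspose_iff.mp hQ⟩
  · rintro ⟨hA, hC⟩
    exact exists_isHermitian_posDef_fromBlocks B (by simpa using hA) (by simpa using hC)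
end

section
/- Let A ∈ ℂ^{m×n} and B ∈ ℂ^{m×m}. Then: (a) there exists X ∈ ℂ^{n×n} such that AXX*A* ⪰ BB* if and only if ℛ(B) ⊆ ℛ(A); (b) there exists X ∈ ℂ^{n×n} such that AXX*A* ≻ BB* if and only if r(A) = m. -/
open Matrix ComplexOrder

/-! For `w ∈ ker Aᴴ` the Hermitian form of `A X Xᴴ Aᴴ - B Bᴴ` at `w` equals `-‖Bᴴ w‖²`. Hence
positive semidefiniteness forces `ker Aᴴ ⊆ ker Bᴴ`, i.e. `Bᴴ = C Aᴴ` and `ℛ(B) ⊆ ℛ(A)`, while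
positive definiteness forces `ker Aᴴ = 0`, i.e. `r(A) = m`. Conversely, if `D = A C` then any `X`
with `X Xᴴ = C Cᴴ` (a square root) gives `A X Xᴴ Aᴴ = D Dᴴ`; take `D = B` in the first case and,
when `A` is onto, `D Dᴴ = B Bᴴ + 1` in the second. -/

namespace LinearMap

theorem exists_comp_eq_of_ker_le {K V W U : Type*} [Field K]
    [AddCommGroup V] [Module K V] [AddCommGroup W] [Module K W] [AddCommGroup U] [Module K U]
    {f : V →ₗ[K] W} {g : V →ₗ[K] U} (h : ker f ≤ ker g) : ∃ φ : W →ₗ[K] U, φ ∘ₗ f = g := by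
  obtain ⟨φ, hφ⟩ := exists_extend ((ker f).liftQ g h ∘ₗ f.quotKerEquivRange.symm.toLinearMap)
  refine ⟨φ, ext fun x => ?_⟩
  simpa using congr($hφ ⟨f x, mem_range_self f x⟩)

end LinearMap

namespace Matrix

section Field

variable {K : Type*} [Field K] {l m n p : Type*} [Fintype n]

theorem exists_mul_eq_of_ker_mulVecLin_le [Fintype l] [Fintype m] [DecidableEq m]
    [DecidableEq n] {A : Matrix m n K} {B : Matrix l n K}
    (h : LinearMap.ker A.mulVecLin ≤ LinearMap.ker B.mulVecLin) :
    ∃ C : Matrix l m K, C * A = B := by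
  obtain ⟨φ, hφ⟩ := LinearMap.exists_comp_eq_of_ker_le h
  refine ⟨LinearMap.toMatrix' φ, ?_⟩
  simpa [LinearMap.toMatrix'_comp, ← Matrix.toLin'_apply'] using congr(LinearMap.toMatrix' $hφ)

theorem exists_mul_eq_of_range_mulVecLin_le_s10 [Fintype p] [DecidableEq p] {A : Matrix m n K}
    {D : Matrix m p K}
    (h : LinearMap.range D.mulVecLin ≤ LinearMap.range A.mulVecLin) :
    ∃ C : Matrix n p K, A * C = D := by
  choose c hc using fun j => h (LinearMap.mem_range_self D.mulVecLin (Pi.single j 1))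
  refine ⟨(Matrix.of c)ᵀ, ext fun i j => ?_⟩
  simpa [mul_apply, mulVec, dotProduct, Pi.single_apply] using congrFun (hc j) i

theorem range_mulVecLin_eq_top_iff_rank_eq [Fintype m] {A : Matrix m n K} :
    LinearMap.range A.mulVecLin = ⊤ ↔ A.rank = Fintype.card m := by
  rw [Submodule.eq_top_iff_finrank_eq, Module.finrank_fintype_fun_eq_card]
  rfl

end Field

section RCLike

variable {𝕜 : Type*} [RCLike 𝕜] {m n p : Type*} [Fintype n] [Fintype p]

theorem range_mulVecLin_le_of_ker_conjTranspose_le [Fintype m] [DecidableEq m] [DecidableEq n]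
    {A : Matrix m n 𝕜} {B : Matrix m p 𝕜}
    (h : LinearMap.ker Aᴴ.mulVecLin ≤ LinearMap.ker Bᴴ.mulVecLin) :
    LinearMap.range B.mulVecLin ≤ LinearMap.range A.mulVecLin := by
  obtain ⟨C, hC⟩ := exists_mul_eq_of_ker_mulVecLin_le h
  rw [← conjTranspose_conjTranspose B, ← hC, conjTranspose_mul, conjTranspose_conjTranspose,
    mulVecLin_mul]
  exact LinearMap.range_comp_le_range _ _

theorem star_dotProduct_sub_mul_conjTranspose_mulVec [Fintype m] {M A : Matrix m n 𝕜}
    {B : Matrix m p 𝕜} {w : m → 𝕜} (hw : Aᴴ *ᵥ w = 0) :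
    star w ⬝ᵥ (M * Aᴴ - B * Bᴴ) *ᵥ w = -(star (Bᴴ *ᵥ w) ⬝ᵥ Bᴴ *ᵥ w) := by
  rw [sub_mulVec, ← mulVec_mulVec, hw, mulVec_zero, zero_sub, dotProduct_neg, ← mulVec_mulVec,
    dotProduct_mulVec, star_mulVec, conjTranspose_conjTranspose]

theorem ker_conjTranspose_le_of_posSemidef [Fintype m] {M A : Matrix m n 𝕜} {B : Matrix m p 𝕜}
    (h : (M * Aᴴ - B * Bᴴ).PosSemidef) :
    LinearMap.ker Aᴴ.mulVecLin ≤ LinearMap.ker Bᴴ.mulVecLin := by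
  intro w hw
  have hq := h.dotProduct_mulVec_nonneg w
  rw [star_dotProduct_sub_mul_conjTranspose_mulVec hw, neg_nonneg] at hq
  exact dotProduct_star_self_eq_zero.mp (hq.antisymm (dotProduct_star_self_nonneg _))

theorem ker_conjTranspose_eq_bot_of_posDef [Fintype m] {M A : Matrix m n 𝕜} {B : Matrix m p 𝕜}
    (h : (M * Aᴴ - B * Bᴴ).PosDef) : LinearMap.ker Aᴴ.mulVecLin = ⊥ := by
  refine ker_mulVecLin_eq_bot_iff.mpr fun w hw => ?_
  by_contra hw0
  have hq := h.dotProduct_mulVec_pos hw0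
  rw [star_dotProduct_sub_mul_conjTranspose_mulVec hw, neg_pos] at hq
  exact hq.not_ge (dotProduct_star_self_nonneg _)

open scoped MatrixOrder in
theorem PosSemidef.exists_mul_conjTranspose_eq [DecidableEq n] {P : Matrix n n 𝕜}
    (hP : P.PosSemidef) :
    ∃ X : Matrix n n 𝕜, X * Xᴴ = P :=
  ⟨CFC.sqrt P, by rw [(CFC.sqrt_nonneg P).posSemidef.1, CFC.sqrt_mul_sqrt_self P hP.nonneg]⟩

theorem exists_mul_mul_conjTranspose_eq_of_range_le [DecidableEq n] [DecidableEq p]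
    {A : Matrix m n 𝕜} {D : Matrix m p 𝕜}
    (h : LinearMap.range D.mulVecLin ≤ LinearMap.range A.mulVecLin) :
    ∃ X : Matrix n n 𝕜, A * X * Xᴴ * Aᴴ = D * Dᴴ := by
  obtain ⟨C, rfl⟩ := exists_mul_eq_of_range_mulVecLin_le_s10 h
  obtain ⟨X, hX⟩ := (posSemidef_self_mul_conjTranspose C).exists_mul_conjTranspose_eq
  exact ⟨X, by rw [conjTranspose_mul, Matrix.mul_assoc A X, hX]; simp only [Matrix.mul_assoc]⟩

end RCLike

end Matrix

theorem stmt10 {m n : ℕ} (A : Matrix (Fin m) (Fin n) ℂ) (B : Matrix (Fin m) (Fin m) ℂ) :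
    ((∃ X : Matrix (Fin n) (Fin n) ℂ, (A * X * Xᴴ * Aᴴ - B * Bᴴ).PosSemidef) ↔
        LinearMap.range B.mulVecLin ≤ LinearMap.range A.mulVecLin) ∧
      ((∃ X : Matrix (Fin n) (Fin n) ℂ, (A * X * Xᴴ * Aᴴ - B * Bᴴ).PosDef) ↔
        A.rank = m) := by
  refine ⟨⟨fun ⟨X, hX⟩ => range_mulVecLin_le_of_ker_conjTranspose_le
    (ker_conjTranspose_le_of_posSemidef hX), fun h => ?_⟩, ?_⟩
  · obtain ⟨X, hX⟩ := exists_mul_mul_conjTranspose_eq_of_range_le h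
    exact ⟨X, by rw [hX, sub_self]; exact .zero⟩
  have hrank := range_mulVecLin_eq_top_iff_rank_eq (A := A)
  rw [Fintype.card_fin] at hrank
  rw [← hrank]
  constructor
  · rintro ⟨X, hX⟩
    have hone : LinearMap.range (1 : Matrix (Fin m) (Fin m) ℂ).mulVecLin ≤
        LinearMap.range A.mulVecLin :=
      range_mulVecLin_le_of_ker_conjTranspose_le
        ((ker_conjTranspose_eq_bot_of_posDef hX).trans_le bot_le)
    rwa [mulVecLin_one, LinearMap.range_id, top_le_iff] at hone
  · intro hA
    obtain ⟨D, hD⟩ := ((posSemidef_self_mul_conjTranspose B).add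
      PosDef.one.posSemidef).exists_mul_conjTranspose_eq
    obtain ⟨X, hX⟩ := exists_mul_mul_conjTranspose_eq_of_range_le
      (hA ▸ le_top : LinearMap.range D.mulVecLin ≤ _)
    exact ⟨X, by rw [hX, hD, add_sub_cancel_left]; exact .one⟩
end
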